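/- arXiv:1903.00202 — 2 statements merged into one kernel-verified Lean document; each statement's English description precedes it below -/
import Mathlib

section
/- Let G be a countable group. The set of amenable subgroups of G is closed in Sub(G) with respect to the Chabauty topology. -/
open scoped Classical ENNReal
open Topology Filter

noncomputable section

namespace QR

/-- The evaluation of a unitary representation on an element of the group algebra `ℂ[G]`. -/
def repAlg {G : Type*} [Group G] {E : Type*} [NormedAddCommGroup E] [NormedSpace ℂ E]
    (π : G →* (E →L[ℂ] E)) (f : MonoidAlgebra ℂ G) : E →L[ℂ] E :=
  MonoidAlgebra.lift ℂ (E →L[ℂ] E) G π f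

/-- Weak containment `ρ ≺ π` of representations: `‖ρ(f)‖ ≤ ‖π(f)‖` for every element `f` of
the group algebra `ℂ[G]`. -/
def WeaklyContained {G : Type*} [Group G] {E F : Type*}
    [NormedAddCommGroup E] [NormedSpace ℂ E] [NormedAddCommGroup F] [NormedSpace ℂ F]
    (ρ : G →* (E →L[ℂ] E)) (π : G →* (F →L[ℂ] F)) : Prop :=
  ∀ f : MonoidAlgebra ℂ G, ‖repAlg ρ f‖ ≤ ‖repAlg π f‖

/-- The trivial (one-dimensional) representation `1_G`. -/
def trivialRep (G : Type*) [Group G] : G →* (ℂ →L[ℂ] ℂ) := 1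

section lp

variable {X K : Type*} [NormedAddCommGroup K] [InnerProductSpace ℂ K]

lemma memTwist (e : X ≃ X) (U : X → (K ≃ₗᵢ[ℂ] K)) (F : lp (fun _ : X => K) 2) :
    Memℓp (fun x => U x (F (e.symm x))) 2 := by
  apply memℓp_gen
  have hs : Summable fun x : X => ‖F x‖ ^ (2 : ℝ≥0∞).toReal :=
    (lp.memℓp F).summable (by norm_num)
  have : Summable fun x : X => ‖F (e.symm x)‖ ^ (2 : ℝ≥0∞).toReal :=
    (e.symm.summable_iff (f := fun x : X => ‖F x‖ ^ (2 : ℝ≥0∞).toReal)).2 hs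
  simpa [LinearIsometryEquiv.norm_map] using this

/-- The twisted translation operator on `ℓ²(X, K)`. -/
def twistOp (e : X ≃ X) (U : X → (K ≃ₗᵢ[ℂ] K)) :
    lp (fun _ : X => K) 2 →L[ℂ] lp (fun _ : X => K) 2 :=
  LinearMap.mkContinuous
    { toFun := fun F => ⟨fun x => U x (F (e.symm x)), memTwist e U F⟩
      map_add' := by
        intro F G'
        apply lp.ext
        funext x
        simp [lp.coeFn_add, Pi.add_apply]; rfl
      map_smul' := by
        intro c F
        apply lp.ext
        funext x
        simp [lp.coeFn_smul, Pi.smul_apply] }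
    1
    (by
      intro F
      have h2 : (0:ℝ) < (2 : ℝ≥0∞).toReal := by norm_num
      rw [one_mul]
      apply le_of_eq
      rw [lp.norm_eq_tsum_rpow h2, lp.norm_eq_tsum_rpow h2]
      congr 1
      have := (e.symm).tsum_eq (f := fun x : X => ‖F x‖ ^ (2 : ℝ≥0∞).toReal)
      simpa [LinearIsometryEquiv.norm_map] using this)

@[simp] lemma twistOp_apply (e : X ≃ X) (U : X → (K ≃ₗᵢ[ℂ] K))
    (F : lp (fun _ : X => K) 2) (x : X) :
    (twistOp e U F : ∀ _ : X, K) x = U x (F (e.symm x)) := rfl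

end lp

/-- The permutation (unitary) representation of `Γ` on `ℓ²(X)` attached to an action of `Γ`
on the set `X`, given by `(π(g)F)(x) = F(g⁻¹ • x)`. -/
def permRep (Γ X : Type*) [Group Γ] [MulAction Γ X] :
    Γ →* (lp (fun _ : X => ℂ) 2 →L[ℂ] lp (fun _ : X => ℂ) 2) where
  toFun g := twistOp (MulAction.toPerm g) (fun _ => LinearIsometryEquiv.refl ℂ ℂ)
  map_one' := by
    apply ContinuousLinearMap.ext
    intro F
    apply lp.ext
    funext x
    simp
  map_mul' := by
    intro g g'
    apply ContinuousLinearMap.ext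
    intro F
    apply lp.ext
    funext x
    simp [mul_smul]

/-- The left regular representation `λ_G` of `G` on `ℓ²(G)`. -/
def regularRep (G : Type*) [Group G] :
    G →* (lp (fun _ : G => ℂ) 2 →L[ℂ] lp (fun _ : G => ℂ) 2) :=
  permRep G G

/-- The quasi-regular representation `λ_{G/H}` of `G` on `ℓ²(G/H)`. -/
def quasiRegRep (G : Type*) [Group G] (H : Subgroup G) :
    G →* (lp (fun _ : G ⧸ H => ℂ) 2 →L[ℂ] lp (fun _ : G ⧸ H => ℂ) 2) :=
  permRep G (G ⧸ H)

/-- Amenability of a (discrete) group, via the Hulanicki–Reiter characterization: the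
trivial representation is weakly contained in the left regular representation. -/
def IsAmenable (G : Type*) [Group G] : Prop :=
  WeaklyContained (trivialRep G) (regularRep G)

/-- The embedding of `Sub(G)` into `{0,1}^G` by characteristic functions. -/
def chabautyEmbed (G : Type*) [Group G] : Subgroup G → (G → Bool) :=
  fun H g => decide (g ∈ H)

/-- The Chabauty topology on the space of subgroups of a discrete group `G`: the topology
induced from the product topology on `{0,1}^G` via characteristic functions. -/
def chabautyTopology (G : Type*) [Group G] : TopologicalSpace (Subgroup G) :=
  TopologicalSpace.induced (chabautyEmbed G) inferInstance

/-- The conjugate subgroup `gHg⁻¹`. -/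
def conjSubgroup {G : Type*} [Group G] (g : G) (H : Subgroup G) : Subgroup G :=
  Subgroup.map (MulAut.conj g).toMonoidHom H

/-- The conjugacy class of a subgroup, as a subset of `Sub(G)`. -/
def conjClass {G : Type*} [Group G] (H : Subgroup G) : Set (Subgroup G) :=
  {K | ∃ g : G, conjSubgroup g H = K}

/-!
Restricted to a subgroup `H`, the regular representation of `G` is a direct sum of copies of
the regular representation of `H`, one for each right coset `Hg`. Hence `‖λ_G(f)‖ = ‖λ_H(f)‖`
for `f ∈ ℂ[H]`, and `H` is amenable iff `‖1_G(f)‖ ≤ ‖λ_G(f)‖` for every `f ∈ ℂ[G]` supported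
in `H`. For a fixed `f` this is a closed condition on `H`, because `f` has finite support and so
`{H | supp f ⊆ H}` is open in the Chabauty topology.
-/

namespace lp

variable {X Y E : Type*} [NormedAddCommGroup E] {p : ℝ≥0∞}

lemma memℓp_comp (hp : 0 < p.toReal) (F : lp (fun _ : Y => E) p) {i : X → Y}
    (hi : Function.Injective i) : Memℓp (F ∘ i) p :=
  (memℓp_gen_iff hp).2 (((lp.memℓp F).summable hp).comp_injective hi)

lemma norm_rpow_extend_zero (hp : 0 < p.toReal) (F : X → E) (i : X → Y) :
    (fun y => ‖Function.extend i F 0 y‖ ^ p.toReal)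
      = Function.extend i (fun x => ‖F x‖ ^ p.toReal) 0 := by
  funext y
  rw [Function.apply_extend (fun v : E => ‖v‖ ^ p.toReal)]
  simp [Function.comp_def, Real.zero_rpow hp.ne', ← Pi.zero_def]

lemma memℓp_extend_zero (hp : 0 < p.toReal) (F : lp (fun _ : X => E) p) {i : X → Y}
    (hi : Function.Injective i) : Memℓp (Function.extend i F 0) p := by
  rw [memℓp_gen_iff hp, norm_rpow_extend_zero hp, summable_extend_zero hi]
  exact (lp.memℓp F).summable hp

def comp (hp : 0 < p.toReal) (F : lp (fun _ : Y => E) p) {i : X → Y}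
    (hi : Function.Injective i) : lp (fun _ : X => E) p :=
  ⟨F ∘ i, memℓp_comp hp F hi⟩

def extendZero (hp : 0 < p.toReal) (F : lp (fun _ : X => E) p) {i : X → Y}
    (hi : Function.Injective i) : lp (fun _ : Y => E) p :=
  ⟨Function.extend i F 0, memℓp_extend_zero hp F hi⟩

variable (hp : 0 < p.toReal) {i : X → Y} (hi : Function.Injective i)

@[simp] lemma comp_apply (F : lp (fun _ : Y => E) p) (x : X) : comp hp F hi x = F (i x) := rfl

lemma comp_extendZero (F : lp (fun _ : X => E) p) : comp hp (extendZero hp F hi) hi = F :=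
  lp.ext <| funext fun x => hi.extend_apply _ _ x

lemma norm_extendZero (F : lp (fun _ : X => E) p) :
    ‖extendZero hp F hi‖ = ‖F‖ := by
  rw [← Real.rpow_left_inj (lp.norm_nonneg' _) (lp.norm_nonneg' _) hp.ne', lp.norm_rpow_eq_tsum hp,
    lp.norm_rpow_eq_tsum hp]
  exact (norm_rpow_extend_zero hp F i).symm ▸ tsum_extend_zero hi _

lemma norm_comp_le (F : lp (fun _ : Y => E) p) : ‖comp hp F hi‖ ≤ ‖F‖ := by
  rw [← Real.rpow_le_rpow_iff (lp.norm_nonneg' _) (lp.norm_nonneg' _) hp, lp.norm_rpow_eq_tsum hp,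
    lp.norm_rpow_eq_tsum hp]
  have hF := (lp.memℓp F).summable hp
  exact (hF.comp_injective hi).tsum_le_tsum_of_inj i hi (fun _ _ => by positivity)
    (fun _ => le_rfl) hF

section Fiberwise

variable {T : Type*} (e : T × X ≃ Y)

lemma fiber_injective (t : T) : Function.Injective fun x => e (t, x) :=
  e.injective.comp (Prod.mk_right_injective t)

lemma hasSum_norm_rpow_comp_fiber (F : lp (fun _ : Y => E) p) :
    HasSum (fun t => ‖comp hp F (fiber_injective e t)‖ ^ p.toReal) (‖F‖ ^ p.toReal) :=
  (e.hasSum_iff.2 (lp.hasSum_norm hp F)).prod_fiberwise fun t =>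
    lp.hasSum_norm hp (comp hp F (fiber_injective e t))

variable {𝕜 : Type*} [NontriviallyNormedField 𝕜] [NormedSpace 𝕜 E] [Fact (1 ≤ p)]

/-- `hAB` says that `A` maps each fiber `e (t, ·)` of `Y` to itself and acts there as `B`. -/
theorem opNorm_eq_of_fiberwise [Nonempty T]
    (A : lp (fun _ : Y => E) p →L[𝕜] lp (fun _ : Y => E) p)
    (B : lp (fun _ : X => E) p →L[𝕜] lp (fun _ : X => E) p)
    (hAB : ∀ F t, comp hp (A F) (fiber_injective e t) = B (comp hp F (fiber_injective e t))) :
    ‖A‖ = ‖B‖ := by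
  apply le_antisymm
  · refine A.opNorm_le_bound (norm_nonneg _) fun F => ?_
    have hA := hasSum_norm_rpow_comp_fiber hp e (A F)
    simp only [hAB] at hA
    have hB := (hasSum_norm_rpow_comp_fiber hp e F).mul_left (‖B‖ ^ p.toReal)
    rw [← Real.rpow_le_rpow_iff (norm_nonneg _) (by positivity) hp,
      Real.mul_rpow (norm_nonneg _) (norm_nonneg _)]
    refine hasSum_le (fun t => ?_) hA hB
    rw [← Real.mul_rpow (norm_nonneg _) (norm_nonneg _)]
    exact Real.rpow_le_rpow (norm_nonneg _) (B.le_opNorm _) hp.le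
  · obtain ⟨t⟩ := ‹Nonempty T›
    refine B.opNorm_le_bound (norm_nonneg _) fun F => ?_
    have hi := fiber_injective e t
    calc ‖B F‖ = ‖comp hp (A (extendZero hp F hi)) hi‖ := by rw [hAB, comp_extendZero]
      _ ≤ ‖A (extendZero hp F hi)‖ := norm_comp_le hp hi _
      _ ≤ ‖A‖ * ‖F‖ := norm_extendZero hp hi F ▸ A.le_opNorm _

end Fiberwise

end lp

section Representations

variable {G H : Type*} [Group G] [Group H]

lemma repAlg_mapDomain {E : Type*} [NormedAddCommGroup E] [NormedSpace ℂ E]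
    (π : G →* (E →L[ℂ] E)) (φ : H →* G) (f : MonoidAlgebra ℂ H) :
    repAlg π (MonoidAlgebra.mapDomain φ f) = repAlg (π.comp φ) f := by
  simp only [repAlg, MonoidAlgebra.lift_apply, MonoidAlgebra.coeff_mapDomain]
  exact Finsupp.sum_mapDomain_index (fun g => zero_smul ℂ (π g)) fun g _ _ => add_smul _ _ (π g)

lemma trivialRep_comp (φ : H →* G) : (trivialRep G).comp φ = trivialRep H :=
  MonoidHom.one_comp φ

lemma permRep_apply {X : Type*} [MulAction G X] (g : G) (F : lp (fun _ : X => ℂ) 2) (x : X) :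
    permRep G X g F x = F (g⁻¹ • x) := by
  simp [permRep]

lemma repAlg_permRep_apply {X : Type*} [MulAction G X] (f : MonoidAlgebra ℂ G)
    (F : lp (fun _ : X => ℂ) 2) (x : X) :
    repAlg (permRep G X) f F x = f.coeff.sum fun g c => c * F (g⁻¹ • x) := by
  rw [repAlg, MonoidAlgebra.lift_apply, Finsupp.sum, Finsupp.sum, sum_apply, lp.coeFn_sum,
    Finset.sum_apply]
  refine Finset.sum_congr rfl fun g _ => ?_
  rw [smul_apply, lp.coeFn_smul, Pi.smul_apply, smul_eq_mul, permRep_apply]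

/-- `he` says that `e` identifies the free `G`-set `X` with `T` copies of `G`. -/
theorem norm_repAlg_permRep_eq_regularRep {X T : Type*} [MulAction G X] [Nonempty T]
    (e : T × G ≃ X) (he : ∀ t g γ, e (t, g * γ) = g • e (t, γ)) (f : MonoidAlgebra ℂ G) :
    ‖repAlg (permRep G X) f‖ = ‖repAlg (regularRep G) f‖ := by
  refine lp.opNorm_eq_of_fiberwise (by norm_num) e _ _ fun F t => lp.ext <| funext fun γ => ?_
  simp only [lp.comp_apply, regularRep, repAlg_permRep_apply, smul_eq_mul]
  refine Finsupp.sum_congr fun g _ => ?_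
  rw [he]

lemma regularRep_comp_subtype (K : Subgroup G) : (regularRep G).comp K.subtype = permRep K G := by
  ext g F x
  simp only [MonoidHom.comp_apply, regularRep, permRep_apply]
  rfl

theorem norm_repAlg_regularRep_mapDomain_subtype (K : Subgroup G) (f : MonoidAlgebra ℂ K) :
    ‖repAlg (regularRep G) (MonoidAlgebra.mapDomain K.subtype f)‖
      = ‖repAlg (regularRep K) f‖ := by
  obtain ⟨T, hT, h1⟩ := Subgroup.exists_isComplement_right K 1
  have : Nonempty T := ⟨⟨1, h1⟩⟩
  rw [repAlg_mapDomain, regularRep_comp_subtype]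
  refine norm_repAlg_permRep_eq_regularRep ((Equiv.prodComm T K).trans hT.equiv.symm)
    (fun t g γ => mul_assoc (g : G) γ t) f

end Representations

theorem isAmenable_subgroup_iff {G : Type*} [Group G] (H : Subgroup G) :
    IsAmenable H ↔ ∀ f : MonoidAlgebra ℂ G, (f.coeff.support : Set G) ⊆ H →
      ‖repAlg (trivialRep G) f‖ ≤ ‖repAlg (regularRep G) f‖ := by
  have hrange : Set.range H.subtype = H := by rw [H.coe_subtype, Subtype.range_coe]
  constructor
  · intro hH f hf
    rw [← MonoidAlgebra.mapDomain_comapDomain (x := f) (hrange ▸ hf) H.subtype_injective,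
      repAlg_mapDomain, trivialRep_comp, norm_repAlg_regularRep_mapDomain_subtype]
    exact hH _
  · intro hH f
    have hf : ((MonoidAlgebra.mapDomain H.subtype f).coeff.support : Set G) ⊆ H := by
      intro g hg
      rw [Finset.mem_coe, MonoidAlgebra.coeff_mapDomain] at hg
      obtain ⟨k, -, rfl⟩ := Finset.mem_image.1 (Finsupp.mapDomain_support hg)
      exact k.2
    have := hH _ hf
    rwa [repAlg_mapDomain, trivialRep_comp, norm_repAlg_regularRep_mapDomain_subtype] at this

lemma isOpen_setOf_mem {G : Type*} [Group G] (g : G) :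
    IsOpen[chabautyTopology G] {H : Subgroup G | g ∈ H} := by
  have : {H : Subgroup G | g ∈ H} = chabautyEmbed G ⁻¹' ((fun b => b g) ⁻¹' {true}) := by
    ext; simp [chabautyEmbed]
  rw [this]
  exact isOpen_induced ((isOpen_discrete _).preimage (continuous_apply g))

theorem isClosed_amenable_subgroups_general (G : Type*) [Group G] :
    IsClosed[chabautyTopology G] {H : Subgroup G | IsAmenable H} := by
  let _ := chabautyTopology G
  simp_rw [isAmenable_subgroup_iff, Set.ofPred_forall]
  refine isClosed_iInter fun f => isClosed_imp ?_ isClosed_const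
  simp only [Set.subset_def, Finset.mem_coe, Set.ofPred_forall]
  exact isOpen_biInter_finset fun g _ => isOpen_setOf_mem g

/-- The set of amenable subgroups of a countable group `G` is closed in
`Sub(G)` for the Chabauty topology. -/
theorem isClosed_amenable_subgroups (G : Type*) [Group G] [Countable G] :
    IsClosed[chabautyTopology G] {H : Subgroup G | IsAmenable H} :=
  isClosed_amenable_subgroups_general G

end QR
end
end

section
/- Let G act by homeomorphisms on a Hausdorff space X, let x ∈ X, and suppose the closure of the orbit Gx contains a point z with trivial stabilizer. Then for every subgroup H of G_x, the trivial subgroup {e} belongs to the Chabauty closure of the conjugacy class of H, and λ_G is weakly contained in λ_{G/H}. -/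
open scoped Classical ENNReal
open Topology Filter

noncomputable section

namespace QR

open scoped Pointwise

/-!
Near `z` every nontrivial element of a finite set `D ⊆ G` moves all points, so some `a • x` in
the orbit has a stabilizer meeting `D` only in `1`; since `a H a⁻¹ ≤ G_{a • x}`, conjugates of `H`
agree with `{e}` on any finite set. For weak containment it suffices to test finitely supported
vectors of `ℓ²(G)`. If `a H a⁻¹` meets `T⁻¹ T` only in `1`, the equivariant map `t ↦ t a H` is
injective on `T`, and pushing a vector forward along it preserves its norm and commutes with the
group algebra as long as the supports of the vector and of its image lie in `T`.
-/

section Chabauty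

variable {G : Type*} [Group G]

lemma mem_chabautyClosure_of_forall_finset {K : Subgroup G} {𝒮 : Set (Subgroup G)}
    (h : ∀ D : Finset G, ∃ K' ∈ 𝒮, ∀ d ∈ D, d ∈ K' ↔ d ∈ K) :
    K ∈ closure[chabautyTopology G] 𝒮 := by
  let := chabautyTopology G
  rw [mem_closure_iff]
  intro o ho hKo
  obtain ⟨V, hV, rfl⟩ := isOpen_induced_iff.1 ho
  obtain ⟨I, U, hU, hIU⟩ := isOpen_pi_iff.1 hV _ hKo
  obtain ⟨K', hK'𝒮, hK'K⟩ := h I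
  refine ⟨K', hIU fun i hi => ?_, hK'𝒮⟩
  have hagree : chabautyEmbed G K' i = chabautyEmbed G K i := decide_eq_decide.2 (hK'K i hi)
  exact hagree ▸ (hU i hi).2

lemma bot_mem_chabautyClosure_of_forall_finset {𝒮 : Set (Subgroup G)}
    (h : ∀ D : Finset G, ∃ K ∈ 𝒮, ∀ d ∈ D, d ∈ K → d = 1) :
    (⊥ : Subgroup G) ∈ closure[chabautyTopology G] 𝒮 :=
  mem_chabautyClosure_of_forall_finset fun D =>
    (h D).imp fun K ⟨hK𝒮, hKD⟩ =>
      ⟨hK𝒮, fun d hd => ⟨fun hdK => Subgroup.mem_bot.2 (hKD d hd hdK),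
        fun hd1 => Subgroup.mem_bot.1 hd1 ▸ K.one_mem⟩⟩

end Chabauty

section Dynamics

variable {G X : Type*} [Group G] [MulAction G X]

open MulAction

lemma exists_stabilizer_smul_avoids [TopologicalSpace X] [T2Space X]
    (hc : ∀ g : G, Continuous fun x : X => g • x) {x z : X}
    (hz : z ∈ closure (orbit G x)) (hztriv : stabilizer G z = ⊥) (D : Finset G) :
    ∃ a : G, ∀ d ∈ D, d ∈ stabilizer G (a • x) → d = 1 := by
  have hfree : ∀ d ∈ D, ∀ᶠ w in 𝓝 z, d • w = w → d = 1 := by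
    intro d _
    by_cases hd : d = 1
    · exact .of_forall fun _ _ => hd
    have hdz : d • z ≠ z := fun hdz =>
      hd (Subgroup.mem_bot.1 (hztriv ▸ mem_stabilizer_iff.2 hdz))
    exact ((((hc d).continuousAt).ne_iff_eventually_ne continuousAt_id).1 hdz).mono
      fun w hw hdw => absurd hdw hw
  obtain ⟨_, hw, a, rfl⟩ := mem_closure_iff_nhds.1 hz _ ((eventually_all_finset D).2 hfree)
  exact ⟨a, fun d hd hda => hw d hd hda⟩

lemma conjSubgroup_le_stabilizer_smul {H : Subgroup G} {x : X}
    (hH : H ≤ stabilizer G x) (a : G) : conjSubgroup a H ≤ stabilizer G (a • x) := by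
  rw [stabilizer_smul_eq_stabilizer_map_conj]
  exact Subgroup.map_mono hH

def orbitMap (q : X) : G →[G] X where
  toFun g := g • q
  map_smul' g h := mul_smul g h q

lemma injOn_orbitMap {q : X} {T : Finset G}
    (h : ∀ d ∈ T⁻¹ * T, d ∈ stabilizer G q → d = 1) : Set.InjOn (orbitMap q) (T : Set G) := by
  intro t ht t' ht' htt'
  have hstab : t⁻¹ * t' ∈ stabilizer G q := by
    rw [mem_stabilizer_iff, mul_smul, inv_smul_eq_iff]
    exact htt'.symm
  exact inv_mul_eq_one.1 (h _ (Finset.mul_mem_mul (Finset.inv_mem_inv ht) ht') hstab)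

end Dynamics

section LpSpace

variable {ι κ E : Type*} [NormedAddCommGroup E] {p : ℝ≥0∞}

lemma lp_norm_rpow_eq_sum (hp : 0 < p.toReal) {u : lp (fun _ : ι => E) p} {S : Finset ι}
    (hu : ∀ i ∉ S, u i = 0) : ‖u‖ ^ p.toReal = ∑ i ∈ S, ‖u i‖ ^ p.toReal := by
  rw [lp.norm_rpow_eq_tsum hp, tsum_eq_sum]
  intro i hi
  rw [hu i hi, norm_zero, Real.zero_rpow hp.ne']

variable {u : lp (fun _ : ι => E) p} {v : lp (fun _ : κ => E) p} {φ : ι → κ} {S : Finset ι}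

lemma sum_image_norm_rpow_eq (hφ : Set.InjOn φ S) (huv : ∀ i ∈ S, v (φ i) = u i) (r : ℝ) :
    ∑ j ∈ S.image φ, ‖v j‖ ^ r = ∑ i ∈ S, ‖u i‖ ^ r := by
  rw [Finset.sum_image hφ]
  exact Finset.sum_congr rfl fun i hi => by rw [huv i hi]

lemma lp_norm_le_of_injOn (hp : 0 < p.toReal) (hφ : Set.InjOn φ S)
    (huv : ∀ i ∈ S, v (φ i) = u i) (hu : ∀ i ∉ S, u i = 0) : ‖u‖ ≤ ‖v‖ := by
  rw [← Real.rpow_le_rpow_iff (lp.norm_nonneg' _) (lp.norm_nonneg' _) hp,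
    lp_norm_rpow_eq_sum hp hu, ← sum_image_norm_rpow_eq hφ huv]
  exact lp.sum_rpow_le_norm_rpow hp v _

lemma lp_norm_le_of_injOn_of_support_subset_image (hp : 0 < p.toReal) (hφ : Set.InjOn φ S)
    (huv : ∀ i ∈ S, v (φ i) = u i) (hv : ∀ j ∉ S.image φ, v j = 0) : ‖v‖ ≤ ‖u‖ := by
  rw [← Real.rpow_le_rpow_iff (lp.norm_nonneg' _) (lp.norm_nonneg' _) hp,
    lp_norm_rpow_eq_sum hp hv, sum_image_norm_rpow_eq hφ huv]
  exact lp.sum_rpow_le_norm_rpow hp u _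

lemma mem_closure_setOf_finite_support [Fact (1 ≤ p)] (hp : p ≠ ∞) (u : lp (fun _ : ι => E) p) :
    u ∈ closure {u' : lp (fun _ : ι => E) p | ∃ S : Finset ι, ∀ i ∉ S, u' i = 0} := by
  refine mem_closure_of_tendsto (lp.hasSum_single hp u) (.of_forall fun S => ⟨S, fun i hi => ?_⟩)
  rw [lp.coeFn_sum, Finset.sum_apply]
  exact Finset.sum_eq_zero fun j hj => lp.single_apply_ne _ _ _ fun hij => hi (hij ▸ hj)

lemma opNorm_le_of_forall_finite_support {𝕜 F : Type*} [NontriviallyNormedField 𝕜]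
    [NormedSpace 𝕜 E] [NormedAddCommGroup F] [NormedSpace 𝕜 F] [Fact (1 ≤ p)] (hp : p ≠ ∞)
    (A : lp (fun _ : ι => E) p →L[𝕜] F) {C : ℝ} (hC : 0 ≤ C)
    (h : ∀ (u : lp (fun _ : ι => E) p) (S : Finset ι), (∀ i ∉ S, u i = 0) → ‖A u‖ ≤ C * ‖u‖) :
    ‖A‖ ≤ C := by
  refine A.opNorm_le_bound hC fun u => ?_
  have hclosed : IsClosed {u | ‖A u‖ ≤ C * ‖u‖} :=
    isClosed_le A.continuous.norm (continuous_const.mul continuous_norm)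
  refine closure_minimal ?_ hclosed (mem_closure_setOf_finite_support hp u)
  rintro u' ⟨S, hS⟩
  exact h u' S hS

def lpPushforward (p : ℝ≥0∞) (φ : ι → κ) (S : Finset ι) (u : ι → E) : lp (fun _ : κ => E) p :=
  ∑ i ∈ S, lp.single p (φ i) (u i)

lemma lpPushforward_apply (φ : ι → κ) (S : Finset ι) (u : ι → E) (j : κ) :
    lpPushforward p φ S u j = ∑ i ∈ S, (Pi.single (φ i) (u i) : κ → E) j := by
  rw [lpPushforward, lp.coeFn_sum, Finset.sum_apply]
  rfl

lemma lpPushforward_apply_of_notMem_image {φ : ι → κ} {S : Finset ι} (u : ι → E) {j : κ}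
    (hj : j ∉ S.image φ) : lpPushforward p φ S u j = 0 := by
  rw [lpPushforward_apply]
  exact Finset.sum_eq_zero fun i hi =>
    Pi.single_eq_of_ne (fun hji => hj (Finset.mem_image.2 ⟨i, hi, hji.symm⟩)) _

lemma lpPushforward_apply_of_fiber {φ : ι → κ} {S : Finset ι} {u : ι → E}
    (hu : ∀ i ∉ S, u i = 0) {i₀ : ι} (hi₀ : ∀ i ∈ S, φ i = φ i₀ → i = i₀) :
    lpPushforward p φ S u (φ i₀) = u i₀ := by
  rw [lpPushforward_apply]
  by_cases hi₀S : i₀ ∈ S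
  · rw [Finset.sum_eq_single_of_mem i₀ hi₀S fun i hi hne =>
      Pi.single_eq_of_ne (fun h => hne (hi₀ i hi h.symm)) _]
    exact Pi.single_eq_same _ _
  · rw [hu i₀ hi₀S]
    exact Finset.sum_eq_zero fun i hi =>
      Pi.single_eq_of_ne (fun h => hi₀S (hi₀ i hi h.symm ▸ hi)) _

end LpSpace

section PermRep

variable {Γ Y Z : Type*} [Group Γ] [MulAction Γ Y] [MulAction Γ Z]

lemma repAlg_permRep_apply_s16 (f : MonoidAlgebra ℂ Γ) (u : lp (fun _ : Y => ℂ) 2) (y : Y) :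
    repAlg (permRep Γ Y) f u y = ∑ g ∈ f.coeff.support, f.coeff g * u (g⁻¹ • y) := by
  have hsum : repAlg (permRep Γ Y) f = ∑ g ∈ f.coeff.support, f.coeff g • permRep Γ Y g := by
    rw [repAlg, MonoidAlgebra.lift_apply]
    rfl
  rw [hsum, sum_apply, lp.coeFn_sum, Finset.sum_apply]
  rfl

lemma repAlg_permRep_apply_of_notMem_smul {f : MonoidAlgebra ℂ Γ} {u : lp (fun _ : Y => ℂ) 2}
    {S : Finset Y} (hu : ∀ y ∉ S, u y = 0) {y : Y} (hy : y ∉ f.coeff.support • S) :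
    repAlg (permRep Γ Y) f u y = 0 := by
  rw [repAlg_permRep_apply_s16]
  refine Finset.sum_eq_zero fun g hg => ?_
  rw [hu, mul_zero]
  exact fun hgy => hy (smul_inv_smul g y ▸ Finset.smul_mem_smul hg hgy)

lemma repAlg_permRep_apply_map (φ : Y →[Γ] Z) {f : MonoidAlgebra ℂ Γ}
    {u : lp (fun _ : Y => ℂ) 2} {v : lp (fun _ : Z => ℂ) 2} {y : Y}
    (h : ∀ g ∈ f.coeff.support, v (φ (g⁻¹ • y)) = u (g⁻¹ • y)) :
    repAlg (permRep Γ Z) f v (φ y) = repAlg (permRep Γ Y) f u y := by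
  simp only [repAlg_permRep_apply_s16]
  exact Finset.sum_congr rfl fun g hg => by rw [← map_smul, h g hg]

theorem norm_repAlg_permRep_le_of_injOn (φ : Y →[Γ] Z) (f : MonoidAlgebra ℂ Γ)
    {u : lp (fun _ : Y => ℂ) 2} {S : Finset Y} (hu : ∀ y ∉ S, u y = 0)
    (hφ : Set.InjOn φ ↑(S ∪ f.coeff.support • S)) :
    ‖repAlg (permRep Γ Y) f u‖ ≤ ‖repAlg (permRep Γ Z) f‖ * ‖u‖ := by
  have hp2 : (0 : ℝ) < (2 : ℝ≥0∞).toReal := by norm_num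
  set v : lp (fun _ : Z => ℂ) 2 := lpPushforward 2 φ S u
  have hφS : Set.InjOn φ S := hφ.mono (by simp)
  have hφPS : Set.InjOn φ ↑(f.coeff.support • S) := hφ.mono (by simp)
  have hv : ‖v‖ ≤ ‖u‖ :=
    lp_norm_le_of_injOn_of_support_subset_image hp2 hφS
      (fun s hs => lpPushforward_apply_of_fiber hu fun s' hs' h => hφS hs' hs h)
      (fun _ hj => lpPushforward_apply_of_notMem_image _ hj)
  have hmatch : ∀ y ∈ f.coeff.support • S,
      repAlg (permRep Γ Z) f v (φ y) = repAlg (permRep Γ Y) f u y := by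
    intro y hy
    refine repAlg_permRep_apply_map φ fun g hg =>
      lpPushforward_apply_of_fiber hu fun s hs hs' => ?_
    -- equivariance turns a collision `φ s = φ (g⁻¹ • y)` into one inside `f.coeff.support • S`
    have hgs : g • s = y :=
      hφPS (Finset.mem_coe.2 (Finset.smul_mem_smul hg hs)) (Finset.mem_coe.2 hy)
        (by rw [map_smul, hs', ← map_smul, smul_inv_smul])
    rw [← hgs, inv_smul_smul]
  calc ‖repAlg (permRep Γ Y) f u‖ ≤ ‖repAlg (permRep Γ Z) f v‖ :=
        lp_norm_le_of_injOn hp2 hφPS hmatch fun _ hy => repAlg_permRep_apply_of_notMem_smul hu hy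
    _ ≤ ‖repAlg (permRep Γ Z) f‖ * ‖v‖ := (repAlg (permRep Γ Z) f).le_opNorm v
    _ ≤ ‖repAlg (permRep Γ Z) f‖ * ‖u‖ := by gcongr

theorem weaklyContained_permRep_of_forall_injOn
    (h : ∀ T : Finset Y, ∃ φ : Y →[Γ] Z, Set.InjOn φ T) :
    WeaklyContained (permRep Γ Y) (permRep Γ Z) := by
  intro f
  refine opNorm_le_of_forall_finite_support (by norm_num) _ (norm_nonneg _) fun u S hu => ?_
  obtain ⟨φ, hφ⟩ := h (S ∪ f.coeff.support • S)
  exact norm_repAlg_permRep_le_of_injOn φ f hu (by simpa using hφ)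

end PermRep

theorem trivial_in_closure_and_regular_weakly_contained_general (G X : Type*) [Group G]
    [TopologicalSpace X] [T2Space X] [MulAction G X]
    (hc : ∀ g : G, Continuous fun x : X => g • x) (x z : X)
    (hz : z ∈ closure (MulAction.orbit G x)) (hztriv : MulAction.stabilizer G z = ⊥)
    (H : Subgroup G) (hH : H ≤ MulAction.stabilizer G x) :
    (⊥ : Subgroup G) ∈ closure[chabautyTopology G] (conjClass H) ∧
    WeaklyContained (regularRep G) (quasiRegRep G H) := by
  have havoid : ∀ D : Finset G, ∃ a : G, ∀ d ∈ D, d ∈ conjSubgroup a H → d = 1 := fun D =>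
    (exists_stabilizer_smul_avoids hc hz hztriv D).imp fun a ha d hd hdH =>
      ha d hd (conjSubgroup_le_stabilizer_smul hH a hdH)
  constructor
  · refine bot_mem_chabautyClosure_of_forall_finset fun D => ?_
    obtain ⟨a, ha⟩ := havoid D
    exact ⟨_, ⟨a, rfl⟩, ha⟩
  · refine weaklyContained_permRep_of_forall_injOn fun T => ?_
    obtain ⟨a, ha⟩ := havoid (T⁻¹ * T)
    refine ⟨orbitMap (a • ((1 : G) : G ⧸ H)), injOn_orbitMap fun d hd hdq => ha d hd ?_⟩
    rwa [MulAction.stabilizer_smul_eq_stabilizer_map_conj, MulAction.stabilizer_quotient] at hdq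

/-- Let `G` act by homeomorphisms on a Hausdorff space `X`, let `x ∈ X`,
and suppose the closure of the orbit of `x` contains a point `z` with trivial stabilizer.
Then for every subgroup `H ≤ G_x`, the trivial subgroup lies in the Chabauty closure of the
conjugacy class of `H`, and `λ_G` is weakly contained in `λ_{G/H}`. -/
theorem trivial_in_closure_and_regular_weakly_contained (G X : Type*) [Group G] [Countable G]
    [TopologicalSpace X] [T2Space X] [MulAction G X]
    (hc : ∀ g : G, Continuous fun x : X => g • x) (x z : X)
    (hz : z ∈ closure (MulAction.orbit G x)) (hztriv : MulAction.stabilizer G z = ⊥)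
    (H : Subgroup G) (hH : H ≤ MulAction.stabilizer G x) :
    (⊥ : Subgroup G) ∈ closure[chabautyTopology G] (conjClass H) ∧
    WeaklyContained (regularRep G) (quasiRegRep G H) :=
  trivial_in_closure_and_regular_weakly_contained_general G X hc x z hz hztriv H hH

end QR
end
end
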